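/- arXiv:0906.2324 — 5 statements merged into one kernel-verified Lean document; each statement's English description precedes it below -/
import Mathlib

section
/- Let n ≥ 1 (an integer), κ₁ > 0, R̄ ∈ ℝ, λ > 0 and j ∈ (0,1). Define f_n(ϖ) = −ϖR̄ + ϖ²κ₁/n − λ log(1 − ϖj) for ϖ < 1/j, and define ϖ_n* = (2κ₁/j + nR̄ − √((2κ₁/j − nR̄)² + 8nκ₁λ))/(4κ₁). Then ϖ_n* < 1/j and ϖ_n* is the unique minimizer of f_n on (−∞, 1/j): f_n(ϖ) > f_n(ϖ_n*) for all ϖ < 1/j with ϖ ≠ ϖ_n*. -/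
/-! On the solvency region `ϖ < 1/j` the objective is strictly convex, because its derivative
`-R̄ + 2ϖκ₁/n + λj/(1 - ϖj)` is strictly increasing there. Multiplying that derivative by
`n(1 - ϖj)` leaves a quadratic in `ϖ` whose smaller root is `ϖ_n*`; as the square root exceeds
`|2κ₁/j - nR̄|`, this root lies below `1/j`. A critical point of a strictly convex function is its
unique minimizer. -/

open Real Set

lemma StrictConvexOn.lt_of_hasDerivAt_eq_zero {S : Set ℝ} {f : ℝ → ℝ} {x y : ℝ}
    (hf : StrictConvexOn ℝ S f) (hx : x ∈ S) (hy : y ∈ S) (hyx : y ≠ x)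
    (hf' : HasDerivAt f 0 x) : f x < f y := by
  rcases hyx.lt_or_gt with hlt | hlt
  · have := hf.slope_lt_of_hasDerivWithinAt_Iio hy hx hlt hf'.hasDerivWithinAt
    rw [slope_def_field, div_neg_iff] at this
    rcases this with ⟨-, h⟩ | ⟨h, -⟩ <;> linarith
  · have := hf.lt_slope_of_hasDerivAt hx hy hlt hf'
    rw [slope_def_field, lt_div_iff₀ (sub_pos.2 hlt)] at this
    linarith

noncomputable section JumpObjective

variable (n κ R lam j : ℝ)

def jumpObjective (x : ℝ) : ℝ :=
  -x * R + x ^ 2 * κ / n - lam * log (1 - x * j)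

def jumpObjectiveDeriv (x : ℝ) : ℝ :=
  -R + 2 * x * κ / n + lam * j / (1 - x * j)

def optimalJumpWeight : ℝ :=
  (2 * κ / j + n * R - √((2 * κ / j - n * R) ^ 2 + 8 * n * κ * lam)) / (4 * κ)

variable {n κ R lam j}

lemma hasDerivAt_jumpObjective {x : ℝ} (hx : x * j < 1) :
    HasDerivAt (jumpObjective n κ R lam j) (jumpObjectiveDeriv n κ R lam j x) x := by
  have hpos : 0 < 1 - x * j := sub_pos.2 hx
  have hlog : HasDerivAt (fun y => log (1 - y * j)) (-j / (1 - x * j)) x := by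
    simpa using (((hasDerivAt_id x).mul_const j).const_sub 1).log hpos.ne'
  have hquad : HasDerivAt (fun y => y ^ 2 * κ / n) (2 * x * κ / n) x := by
    simpa using ((hasDerivAt_pow 2 x).mul_const κ).div_const n
  exact ((((hasDerivAt_id x).neg.mul_const R).add hquad).sub (hlog.const_mul lam)).congr_deriv
    (by simp only [jumpObjectiveDeriv]; ring)

lemma strictMonoOn_jumpObjectiveDeriv (hn : 0 < n) (hκ : 0 < κ) (hlam : 0 ≤ lam) (hj : 0 < j) :
    StrictMonoOn (jumpObjectiveDeriv n κ R lam j) (Iio (1 / j)) := by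
  intro x hx y hy hxy
  rw [mem_Iio, lt_div_iff₀ hj] at hx hy
  have hquad : 2 * x * κ / n < 2 * y * κ / n := by gcongr
  have hjump : lam * j / (1 - x * j) ≤ lam * j / (1 - y * j) := by gcongr
  simp only [jumpObjectiveDeriv]
  linarith

lemma strictConvexOn_jumpObjective (hn : 0 < n) (hκ : 0 < κ) (hlam : 0 ≤ lam) (hj : 0 < j) :
    StrictConvexOn ℝ (Iio (1 / j)) (jumpObjective n κ R lam j) := by
  have hderiv : ∀ x ∈ Iio (1 / j),
      HasDerivAt (jumpObjective n κ R lam j) (jumpObjectiveDeriv n κ R lam j x) x :=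
    fun x hx => hasDerivAt_jumpObjective ((lt_div_iff₀ hj).1 hx)
  refine StrictMonoOn.strictConvexOn_of_deriv (convex_Iio _)
    (fun x hx => (hderiv x hx).continuousAt.continuousWithinAt) ?_
  rw [interior_Iio]
  exact (strictMonoOn_jumpObjectiveDeriv hn hκ hlam hj).congr
    fun x hx => ((hderiv x hx).deriv).symm

lemma jumpObjectiveDeriv_eq_zero_iff (hn : n ≠ 0) (hj : j ≠ 0) {x : ℝ} (hx : x * j ≠ 1) :
    jumpObjectiveDeriv n κ R lam j x = 0 ↔
      2 * κ * (x * x) + -(2 * κ / j + n * R) * x + n * (R / j - lam) = 0 := by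
  have hx' : 1 - x * j ≠ 0 := sub_ne_zero.2 hx.symm
  have key : n * (1 - x * j) * jumpObjectiveDeriv n κ R lam j x =
      -j * (2 * κ * (x * x) + -(2 * κ / j + n * R) * x + n * (R / j - lam)) := by
    simp only [jumpObjectiveDeriv]
    field_simp
    ring
  constructor
  · intro h
    rw [h, mul_zero, eq_comm, mul_eq_zero] at key
    exact key.resolve_left (neg_ne_zero.2 hj)
  · intro h
    rw [h, mul_zero, mul_eq_zero] at key
    exact key.resolve_left (mul_ne_zero hn hx')

lemma optimalJumpWeight_lt (hn : 0 < n) (hκ : 0 < κ) (hlam : 0 < lam) :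
    optimalJumpWeight n κ R lam j < 1 / j := by
  set A := 2 * κ / j - n * R
  have hs : |A| < √(A ^ 2 + 8 * n * κ * lam) := by
    rw [← sqrt_sq_eq_abs]
    exact sqrt_lt_sqrt (sq_nonneg A) (by linarith [show 0 < 8 * n * κ * lam by positivity])
  rw [optimalJumpWeight, div_lt_iff₀ (by positivity)]
  have : 1 / j * (4 * κ) = 2 * κ / j + (2 * κ / j) := by ring
  linarith [neg_abs_le A]

lemma jumpObjectiveDeriv_optimalJumpWeight (hn : 0 < n) (hκ : 0 < κ) (hlam : 0 < lam)
    (hj : 0 < j) : jumpObjectiveDeriv n κ R lam j (optimalJumpWeight n κ R lam j) = 0 := by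
  have hlt := optimalJumpWeight_lt (R := R) (j := j) hn hκ hlam
  rw [jumpObjectiveDeriv_eq_zero_iff hn.ne' hj.ne' ((lt_div_iff₀ hj).1 hlt).ne,
    quadratic_eq_zero_iff (by positivity) (s := √((2 * κ / j - n * R) ^ 2 + 8 * n * κ * lam))]
  · right
    rw [optimalJumpWeight]
    ring
  · rw [← sq, sq_sqrt (by positivity), discrim]
    field_simp
    ring

end JumpObjective

theorem stmt_8_general (n : ℕ) (hn : 1 ≤ n) (κ₁ Rbar lam j : ℝ)
    (hκ₁ : 0 < κ₁) (hlam : 0 < lam) (hj₀ : 0 < j)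
    (f : ℝ → ℝ)
    (hf : f = fun ϖ => -ϖ * Rbar + ϖ ^ 2 * κ₁ / n - lam * Real.log (1 - ϖ * j))
    (ϖstar : ℝ)
    (hϖ : ϖstar = (2 * κ₁ / j + n * Rbar
      - Real.sqrt ((2 * κ₁ / j - n * Rbar) ^ 2 + 8 * n * κ₁ * lam)) / (4 * κ₁)) :
    ϖstar < 1 / j ∧ ∀ ϖ : ℝ, ϖ < 1 / j → ϖ ≠ ϖstar → f ϖstar < f ϖ := by
  have hn₀ : (0 : ℝ) < n := by exact_mod_cast hn
  change f = jumpObjective n κ₁ Rbar lam j at hf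
  change ϖstar = optimalJumpWeight n κ₁ Rbar lam j at hϖ
  subst hf hϖ
  have hlt := optimalJumpWeight_lt (R := Rbar) (j := j) hn₀ hκ₁ hlam
  refine ⟨hlt, fun ϖ hϖ hne => ?_⟩
  refine (strictConvexOn_jumpObjective hn₀ hκ₁ hlam.le hj₀).lt_of_hasDerivAt_eq_zero hlt hϖ hne ?_
  rw [← jumpObjectiveDeriv_optimalJumpWeight hn₀ hκ₁ hlam hj₀]
  exact hasDerivAt_jumpObjective ((lt_div_iff₀ hj₀).1 hlt)

theorem stmt_8 (n : ℕ) (hn : 1 ≤ n) (κ₁ Rbar lam j : ℝ)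
    (hκ₁ : 0 < κ₁) (hlam : 0 < lam) (hj₀ : 0 < j) (hj₁ : j < 1)
    (f : ℝ → ℝ)
    (hf : f = fun ϖ => -ϖ * Rbar + ϖ ^ 2 * κ₁ / n - lam * Real.log (1 - ϖ * j))
    (ϖstar : ℝ)
    (hϖ : ϖstar = (2 * κ₁ / j + n * Rbar
      - Real.sqrt ((2 * κ₁ / j - n * Rbar) ^ 2 + 8 * n * κ₁ * lam)) / (4 * κ₁)) :
    ϖstar < 1 / j ∧ ∀ ϖ : ℝ, ϖ < 1 / j → ϖ ≠ ϖstar → f ϖstar < f ϖ :=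
  stmt_8_general n hn κ₁ Rbar lam j hκ₁ hlam hj₀ f hf ϖstar hϖ
end

section
/- Let n ≥ 1 (an integer), κ₁ > 0, R̄ ∈ ℝ, λ > 0 and j ∈ (0,1), and define ϖ_n* = (2κ₁/j + nR̄ − √((2κ₁/j − nR̄)² + 8nκ₁λ))/(4κ₁). Then ϖ_n* < min(nR̄/(2κ₁), 1/j); in particular the optimal aggregate investment in the risky assets is strictly smaller than the no-jump value nR̄/(2κ₁). -/
/-!
Write `a = 2κ₁/j`, `b = nR̄` and `c = 8nκ₁λ > 0`, so that `ϖ_n* = (a + b - √((a - b)² + c)) / (4κ₁)`,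
while `nR̄/(2κ₁) = 2b/(4κ₁)` and `1/j = 2a/(4κ₁)`. Since `c > 0`, the square root strictly exceeds
`|a - b|`, hence `a + b - √((a - b)² + c)` lies strictly below both `2a` and `2b`.
-/

lemma abs_sub_lt_sqrt_sq_add {a b c : ℝ} (hc : 0 < c) : |a - b| < √((a - b) ^ 2 + c) := by
  rw [← Real.sqrt_sq_eq_abs]
  exact Real.sqrt_lt_sqrt (sq_nonneg _) (by linarith)

lemma add_sub_sqrt_sq_add_lt_two_mul_right {a b c : ℝ} (hc : 0 < c) :
    a + b - √((a - b) ^ 2 + c) < 2 * b := by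
  linarith [le_abs_self (a - b), abs_sub_lt_sqrt_sq_add (a := a) (b := b) hc]

lemma add_sub_sqrt_sq_add_lt_two_mul_left {a b c : ℝ} (hc : 0 < c) :
    a + b - √((a - b) ^ 2 + c) < 2 * a := by
  have h := add_sub_sqrt_sq_add_lt_two_mul_right (a := b) (b := a) hc
  rwa [add_comm b a, ← neg_sub a b, neg_sq] at h

theorem stmt_9_general (n : ℕ) (hn : 1 ≤ n) (κ₁ Rbar lam j : ℝ)
    (hκ₁ : 0 < κ₁) (hlam : 0 < lam) (hj₀ : 0 < j)
    (ϖstar : ℝ)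
    (hϖ : ϖstar = (2 * κ₁ / j + n * Rbar
      - Real.sqrt ((2 * κ₁ / j - n * Rbar) ^ 2 + 8 * n * κ₁ * lam)) / (4 * κ₁)) :
    ϖstar < min ((n : ℝ) * Rbar / (2 * κ₁)) (1 / j) := by
  have hn₀ : (0 : ℝ) < n := by exact_mod_cast hn
  have hc : 0 < 8 * n * κ₁ * lam := by positivity
  have h4κ₁ : 0 < 4 * κ₁ := by positivity
  rw [hϖ]
  refine lt_min ?_ ?_
  · calc _ < 2 * (n * Rbar) / (4 * κ₁) :=
          div_lt_div_of_pos_right (add_sub_sqrt_sq_add_lt_two_mul_right hc) h4κ₁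
      _ = _ := by field_simp; ring
  · calc _ < 2 * (2 * κ₁ / j) / (4 * κ₁) :=
          div_lt_div_of_pos_right (add_sub_sqrt_sq_add_lt_two_mul_left hc) h4κ₁
      _ = 1 / j := by field_simp; ring

theorem stmt_9 (n : ℕ) (hn : 1 ≤ n) (κ₁ Rbar lam j : ℝ)
    (hκ₁ : 0 < κ₁) (hlam : 0 < lam) (hj₀ : 0 < j) (hj₁ : j < 1)
    (ϖstar : ℝ)
    (hϖ : ϖstar = (2 * κ₁ / j + n * Rbar
      - Real.sqrt ((2 * κ₁ / j - n * Rbar) ^ 2 + 8 * n * κ₁ * lam)) / (4 * κ₁)) :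
    ϖstar < min ((n : ℝ) * Rbar / (2 * κ₁)) (1 / j) :=
  stmt_9_general n hn κ₁ Rbar lam j hκ₁ hlam hj₀ ϖstar hϖ
end

section
/- Let κ > 0, λ > 0 and R̄ ∈ ℝ, and for j ∈ (0,1) define ϖ_∞*(j) = (2κ/j + R̄ − √((2κ/j − R̄)² + 8κλ))/(4κ). Then j ↦ ϖ_∞*(j) is strictly decreasing on (0,1). Moreover, if R̄ > 0 and R̄/λ < 1, then ϖ_∞*(j) > 0 for 0 < j < R̄/λ and ϖ_∞*(j) < 0 for R̄/λ < j < 1. -/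
lemma aux_mono_14 (R c : ℝ) (hc : 0 < c) {x₁ x₂ : ℝ} (h : x₁ < x₂) :
    x₁ + R - Real.sqrt ((x₁ - R) ^ 2 + c) < x₂ + R - Real.sqrt ((x₂ - R) ^ 2 + c) := by
  have hs : (0:ℝ) ≤ Real.sqrt ((x₁ - R) ^ 2 + c) := Real.sqrt_nonneg _
  have h1 : Real.sqrt ((x₂ - R) ^ 2 + c) < (x₂ - x₁) + Real.sqrt ((x₁ - R) ^ 2 + c) := by
    rw [Real.sqrt_lt' (by linarith)]
    have hsq : Real.sqrt ((x₁ - R) ^ 2 + c) ^ 2 = (x₁ - R) ^ 2 + c :=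
      Real.sq_sqrt (by positivity)
    have ha : x₁ - R < Real.sqrt ((x₁ - R) ^ 2 + c) :=
      Real.lt_sqrt_of_sq_lt (by nlinarith)
    nlinarith
  linarith

theorem stmt_14 (κ lam Rbar : ℝ) (hκ : 0 < κ) (hlam : 0 < lam)
    (ϖ : ℝ → ℝ)
    (hϖ : ϖ = fun j => (2 * κ / j + Rbar
      - Real.sqrt ((2 * κ / j - Rbar) ^ 2 + 8 * κ * lam)) / (4 * κ)) :
    (∀ j₁ ∈ Set.Ioo (0 : ℝ) 1, ∀ j₂ ∈ Set.Ioo (0 : ℝ) 1, j₁ < j₂ → ϖ j₂ < ϖ j₁) ∧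
      (Rbar > 0 → Rbar / lam < 1 →
        (∀ j : ℝ, 0 < j → j < Rbar / lam → 0 < ϖ j) ∧
        (∀ j : ℝ, Rbar / lam < j → j < 1 → ϖ j < 0)) := by
  subst hϖ
  have hc : (0:ℝ) < 8 * κ * lam := by positivity
  constructor
  · rintro j₁ ⟨hj₁, _⟩ j₂ ⟨hj₂, _⟩ hlt
    have hx : 2 * κ / j₂ < 2 * κ / j₁ :=
      div_lt_div_of_pos_left (by positivity) hj₁ hlt
    have := aux_mono_14 Rbar (8 * κ * lam) hc hx
    simp only
    apply div_lt_div_of_pos_right this (by positivity)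
  · intro hR _
    constructor
    · intro j hj hjR
      have hy : 0 < 2 * κ / j + Rbar := by positivity
      have hjl : lam * j < Rbar := by
        have := (lt_div_iff₀ hlam).mp hjR
        linarith
      have hlt : Real.sqrt ((2 * κ / j - Rbar) ^ 2 + 8 * κ * lam) < 2 * κ / j + Rbar := by
        rw [Real.sqrt_lt' hy]
        have h2 : 8 * κ * lam < 4 * (2 * κ / j) * Rbar := by
          rw [show (4:ℝ) * (2 * κ / j) * Rbar = 8 * κ * Rbar / j by ring, lt_div_iff₀ hj]
          nlinarith
        nlinarith
      simp only
      exact div_pos (by linarith) (by positivity)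
    · intro j hjR hj1
      have hj : 0 < j := lt_trans (by positivity) hjR
      have hjl : Rbar < lam * j := by
        have := (div_lt_iff₀ hlam).mp hjR
        linarith
      have hlt : 2 * κ / j + Rbar < Real.sqrt ((2 * κ / j - Rbar) ^ 2 + 8 * κ * lam) := by
        apply Real.lt_sqrt_of_sq_lt
        have h2 : 4 * (2 * κ / j) * Rbar < 8 * κ * lam := by
          rw [show (4:ℝ) * (2 * κ / j) * Rbar = 8 * κ * Rbar / j by ring, div_lt_iff₀ hj]
          nlinarith
        nlinarith
      simp only
      exact div_neg_of_neg_of_pos (by linarith) (by positivity)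
end

section
/- Let v > 0, ρ ∈ (0,1), R̄ ∈ ℝ, λ > 0 and j ∈ (0,1). For each integer n ≥ 1 set κ₁(n) = v²(1+(n−1)ρ) and ϖ_n* = (2κ₁(n)/j + nR̄ − √((2κ₁(n)/j − nR̄)² + 8nκ₁(n)λ))/(4κ₁(n)), and set κ = v²ρ and ϖ_∞* = (2κ/j + R̄ − √((2κ/j − R̄)² + 8κλ))/(4κ). Then ϖ_n* → ϖ_∞* as n → ∞. -/
/-!
Dividing numerator and denominator by `n` shows `ϖ_n* = f (κ₁(n) / n)`, where
`f = jumpOptimalWeight` is the large-`n` formula with `κ` replaced by its argument.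
Since `κ₁(n) / n = v² (1 - ρ) / n + v² ρ → κ` and `f` is continuous at `κ ≠ 0`, the claim follows.
-/

open Filter Topology

noncomputable def jumpOptimalWeight (Rbar lam j x : ℝ) : ℝ :=
  (2 * x / j + Rbar - Real.sqrt ((2 * x / j - Rbar) ^ 2 + 8 * x * lam)) / (4 * x)

lemma continuousAt_jumpOptimalWeight (Rbar lam j : ℝ) {x : ℝ} (hx : x ≠ 0) :
    ContinuousAt (jumpOptimalWeight Rbar lam j) x := by
  unfold jumpOptimalWeight
  exact ContinuousAt.div (by fun_prop) (by fun_prop) (by simpa using hx)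

lemma jumpOptimalWeight_div (Rbar lam j k : ℝ) {t : ℝ} (ht : 0 < t) :
    jumpOptimalWeight Rbar lam j (k / t) =
      (2 * k / j + t * Rbar - Real.sqrt ((2 * k / j - t * Rbar) ^ 2 + 8 * t * k * lam))
        / (4 * k) := by
  have hsq : (2 * k / j - t * Rbar) ^ 2 + 8 * t * k * lam =
      t ^ 2 * ((2 * (k / t) / j - Rbar) ^ 2 + 8 * (k / t) * lam) := by
    field_simp
  rw [hsq, Real.sqrt_mul (sq_nonneg t), Real.sqrt_sq ht.le, jumpOptimalWeight]
  by_cases hk : k = 0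
  · simp [hk]
  · field_simp

theorem stmt_15_general (v ρ Rbar lam j : ℝ) (hv : 0 < v) (hρ₀ : 0 < ρ)
    (κ₁ : ℕ → ℝ) (hκ₁ : κ₁ = fun n : ℕ => v ^ 2 * (1 + ((n : ℝ) - 1) * ρ))
    (ϖn : ℕ → ℝ)
    (hϖn : ϖn = fun n => (2 * κ₁ n / j + (n : ℝ) * Rbar
      - Real.sqrt ((2 * κ₁ n / j - (n : ℝ) * Rbar) ^ 2 + 8 * (n : ℝ) * κ₁ n * lam))
        / (4 * κ₁ n))
    (κ : ℝ) (hκ : κ = v ^ 2 * ρ)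
    (ϖinf : ℝ)
    (hϖinf : ϖinf = (2 * κ / j + Rbar
      - Real.sqrt ((2 * κ / j - Rbar) ^ 2 + 8 * κ * lam)) / (4 * κ)) :
    Tendsto ϖn atTop (nhds ϖinf) := by
  have hκ₁_div : Tendsto (fun n : ℕ => κ₁ n / n) atTop (𝓝 κ) := by
    have := tendsto_add_mul_div_add_mul_atTop_nhds (v ^ 2 * (1 - ρ)) 0 (v ^ 2 * ρ) one_ne_zero
    simp only [hκ₁, hκ, zero_add, one_mul, div_one] at this ⊢
    convert this using 3
    ring
  have hϖn_eq : (fun n : ℕ => jumpOptimalWeight Rbar lam j (κ₁ n / n)) =ᶠ[atTop] ϖn := by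
    filter_upwards [eventually_gt_atTop 0] with n hn
    rw [hϖn, jumpOptimalWeight_div _ _ _ _ (Nat.cast_pos.mpr hn)]
  rw [hϖinf, ← jumpOptimalWeight]
  have hκ_ne : κ ≠ 0 := by rw [hκ]; positivity
  exact ((continuousAt_jumpOptimalWeight Rbar lam j hκ_ne).tendsto.comp hκ₁_div).congr' hϖn_eq

theorem stmt_15 (v ρ Rbar lam j : ℝ) (hv : 0 < v) (hρ₀ : 0 < ρ) (hρ₁ : ρ < 1)
    (hlam : 0 < lam) (hj₀ : 0 < j) (hj₁ : j < 1)
    (κ₁ : ℕ → ℝ) (hκ₁ : κ₁ = fun n : ℕ => v ^ 2 * (1 + ((n : ℝ) - 1) * ρ))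
    (ϖn : ℕ → ℝ)
    (hϖn : ϖn = fun n => (2 * κ₁ n / j + (n : ℝ) * Rbar
      - Real.sqrt ((2 * κ₁ n / j - (n : ℝ) * Rbar) ^ 2 + 8 * (n : ℝ) * κ₁ n * lam))
        / (4 * κ₁ n))
    (κ : ℝ) (hκ : κ = v ^ 2 * ρ)
    (ϖinf : ℝ)
    (hϖinf : ϖinf = (2 * κ / j + Rbar
      - Real.sqrt ((2 * κ / j - Rbar) ^ 2 + 8 * κ * lam)) / (4 * κ)) :
    Tendsto ϖn atTop (nhds ϖinf) :=
  stmt_15_general v ρ Rbar lam j hv hρ₀ κ₁ hκ₁ ϖn hϖn κ hκ ϖinf hϖinf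
end

section
/- Let Σ be an invertible symmetric n×n real matrix, J, R ∈ ℝⁿ with JᵀΣ⁻¹J ≠ 0, γ ≠ 0 and c ∈ ℝ. Suppose ω ∈ ℝⁿ satisfies γΣω + cJ = R, and set y = ωᵀJ. Then ω = (1/γ)Σ⁻¹(R − ((JᵀΣ⁻¹R)/(JᵀΣ⁻¹J))·J) + y·(1/(JᵀΣ⁻¹J))·Σ⁻¹J. -/
open Matrix

theorem stmt_19 (n : ℕ) (Sig : Matrix (Fin n) (Fin n) ℝ)
    (hinv : IsUnit Sig.det) (hsymm : Sig.IsSymm)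
    (J R : Fin n → ℝ) (hJ : J ⬝ᵥ Sig⁻¹.mulVec J ≠ 0)
    (γ c : ℝ) (hγ : γ ≠ 0)
    (ω : Fin n → ℝ)
    (hω : γ • Sig.mulVec ω + c • J = R)
    (y : ℝ) (hy : y = ω ⬝ᵥ J) :
    ω = (1 / γ) • Sig⁻¹.mulVec
          (R - ((J ⬝ᵥ Sig⁻¹.mulVec R) / (J ⬝ᵥ Sig⁻¹.mulVec J)) • J)
        + (y / (J ⬝ᵥ Sig⁻¹.mulVec J)) • Sig⁻¹.mulVec J := by
  have key : Sig⁻¹.mulVec R = γ • ω + c • Sig⁻¹.mulVec J := by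
    rw [← hω, mulVec_add, mulVec_smul, mulVec_smul, mulVec_mulVec,
      Matrix.nonsing_inv_mul _ hinv, one_mulVec]
  have hb : J ⬝ᵥ Sig⁻¹.mulVec R = γ * y + c * (J ⬝ᵥ Sig⁻¹.mulVec J) := by
    rw [key, dotProduct_add, dotProduct_smul, dotProduct_smul, hy,
      dotProduct_comm]
    simp only [smul_eq_mul]
  rw [mulVec_sub, mulVec_smul, hb, key]
  set v := Sig⁻¹.mulVec J with hv
  set a := J ⬝ᵥ v with ha
  ext i
  simp only [Pi.add_apply, Pi.sub_apply, Pi.smul_apply, smul_eq_mul]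
  field_simp [hJ]
  ring
end
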